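/- Let H = (p_x²+p_y²)/2 + a(4x²+y²) + c_1 x + c_2/y² (the SWII Hamiltonian). Then the functions H_cart = p_y²/2 + a y² + c_2/y² and H_par = p_y(y p_x − x p_y) + 2a x y² + (c_1/2) y² − 2c_2 x/y² both Poisson-commute with H on {y ≠ 0}: {H, H_cart} = 0 and {H, H_par} = 0. -/

import Mathlib

noncomputable section

open Real Set

/-- Partial derivative w.r.t. the 1st argument. -/
def pd1 (F : ℝ → ℝ → ℝ → ℝ → ℝ) (x y z w : ℝ) : ℝ := deriv (fun t => F t y z w) x
/-- Partial derivative w.r.t. the 2nd argument. -/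
def pd2 (F : ℝ → ℝ → ℝ → ℝ → ℝ) (x y z w : ℝ) : ℝ := deriv (fun t => F x t z w) y
/-- Partial derivative w.r.t. the 3rd argument. -/
def pd3 (F : ℝ → ℝ → ℝ → ℝ → ℝ) (x y z w : ℝ) : ℝ := deriv (fun t => F x y t w) z
/-- Partial derivative w.r.t. the 4th argument. -/
def pd4 (F : ℝ → ℝ → ℝ → ℝ → ℝ) (x y z w : ℝ) : ℝ := deriv (fun t => F x y z t) w

/-- Canonical Poisson bracket on ℝ⁴ with coordinates (q₁, q₂, p₁, p₂). -/
def pb (F G : ℝ → ℝ → ℝ → ℝ → ℝ) (x y z w : ℝ) : ℝ :=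
  pd1 F x y z w * pd3 G x y z w - pd3 F x y z w * pd1 G x y z w
  + pd2 F x y z w * pd4 G x y z w - pd4 F x y z w * pd2 G x y z w

/-- The SWII Hamiltonian. -/
def Hswii (a c1 c2 : ℝ) : ℝ → ℝ → ℝ → ℝ → ℝ := fun x y px py =>
  (px ^ 2 + py ^ 2) / 2 + a * (4 * x ^ 2 + y ^ 2) + c1 * x + c2 / y ^ 2

/-- The integral inherited from separation in Cartesian coordinates. -/
def Hcart (a c2 : ℝ) : ℝ → ℝ → ℝ → ℝ → ℝ := fun _ y _ py =>
  py ^ 2 / 2 + a * y ^ 2 + c2 / y ^ 2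

/-- The integral inherited from separation in parabolic coordinates. -/
def Hpar (a c1 c2 : ℝ) : ℝ → ℝ → ℝ → ℝ → ℝ := fun x y px py =>
  py * (y * px - x * py) + 2 * a * x * y ^ 2 + c1 / 2 * y ^ 2 - 2 * c2 * x / y ^ 2

section Aux

variable (a c1 c2 x y px py : ℝ)

lemma pd1_Hswii : pd1 (Hswii a c1 c2) x y px py = 8 * a * x + c1 := by
  have h1 : HasDerivAt (fun t : ℝ => t ^ 2) (2 * x) x := by simpa using hasDerivAt_pow 2 x
  have key := ((((h1.const_mul (4:ℝ)).add_const (y ^ 2)).const_mul a).const_add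
      ((px ^ 2 + py ^ 2) / 2)).add ((hasDerivAt_id x).const_mul c1) |>.add_const (c2 / y ^ 2)
  have hf : (fun t : ℝ => (px ^ 2 + py ^ 2) / 2 + a * (4 * t ^ 2 + y ^ 2) + c1 * t + c2 / y ^ 2)
      = fun t : ℝ => (px ^ 2 + py ^ 2) / 2 + a * (4 * t ^ 2 + y ^ 2) + c1 * id t + c2 / y ^ 2 := by
    funext t; simp
  simp only [pd1, Hswii]
  rw [hf]; erw [key.deriv]; ring

lemma pd2_Hswii (hy : y ≠ 0) :
    pd2 (Hswii a c1 c2) x y px py = 2 * a * y - 2 * c2 / y ^ 3 := by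
  have h1 : HasDerivAt (fun t : ℝ => t ^ 2) (2 * y) y := by simpa using hasDerivAt_pow 2 y
  have key := (((h1.const_add (4 * x ^ 2)).const_mul a).const_add ((px ^ 2 + py ^ 2) / 2)
      |>.add_const (c1 * x)).add ((h1.inv (pow_ne_zero 2 hy)).const_mul c2)
  have hf : (fun t : ℝ => (px ^ 2 + py ^ 2) / 2 + a * (4 * x ^ 2 + t ^ 2) + c1 * x + c2 / t ^ 2)
      = fun t : ℝ => (px ^ 2 + py ^ 2) / 2 + a * (4 * x ^ 2 + t ^ 2) + c1 * x + c2 * (t ^ 2)⁻¹ := by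
    funext t; ring
  simp only [pd2, Hswii]
  rw [hf]; erw [key.deriv]; field_simp; ring

lemma pd3_Hswii : pd3 (Hswii a c1 c2) x y px py = px := by
  have h1 : HasDerivAt (fun t : ℝ => t ^ 2) (2 * px) px := by simpa using hasDerivAt_pow 2 px
  have key := (((h1.add_const (py ^ 2)).div_const 2).add_const
      (a * (4 * x ^ 2 + y ^ 2))).add_const (c1 * x) |>.add_const (c2 / y ^ 2)
  simp only [pd3, Hswii]
  rw [key.deriv]; ring

lemma pd4_Hswii : pd4 (Hswii a c1 c2) x y px py = py := by
  have h1 : HasDerivAt (fun t : ℝ => t ^ 2) (2 * py) py := by simpa using hasDerivAt_pow 2 py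
  have key := (((h1.const_add (px ^ 2)).div_const 2).add_const
      (a * (4 * x ^ 2 + y ^ 2))).add_const (c1 * x) |>.add_const (c2 / y ^ 2)
  simp only [pd4, Hswii]
  rw [key.deriv]; ring

lemma pd1_Hcart : pd1 (Hcart a c2) x y px py = 0 := by simp [pd1, Hcart]

lemma pd2_Hcart (hy : y ≠ 0) :
    pd2 (Hcart a c2) x y px py = 2 * a * y - 2 * c2 / y ^ 3 := by
  have h1 : HasDerivAt (fun t : ℝ => t ^ 2) (2 * y) y := by simpa using hasDerivAt_pow 2 y
  have key := ((h1.const_mul a).const_add (py ^ 2 / 2)).add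
      ((h1.inv (pow_ne_zero 2 hy)).const_mul c2)
  have hf : (fun t : ℝ => py ^ 2 / 2 + a * t ^ 2 + c2 / t ^ 2)
      = fun t : ℝ => py ^ 2 / 2 + a * t ^ 2 + c2 * (t ^ 2)⁻¹ := by funext t; ring
  simp only [pd2, Hcart]
  rw [hf]; erw [key.deriv]; field_simp; ring

lemma pd3_Hcart : pd3 (Hcart a c2) x y px py = 0 := by simp [pd3, Hcart]

lemma pd4_Hcart : pd4 (Hcart a c2) x y px py = py := by
  have h1 : HasDerivAt (fun t : ℝ => t ^ 2) (2 * py) py := by simpa using hasDerivAt_pow 2 py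
  have key := ((h1.div_const 2).add_const (a * y ^ 2)).add_const (c2 / y ^ 2)
  simp only [pd4, Hcart]
  rw [key.deriv]; ring

lemma pd1_Hpar : pd1 (Hpar a c1 c2) x y px py
    = -py ^ 2 + 2 * a * y ^ 2 - 2 * c2 / y ^ 2 := by
  have hid := hasDerivAt_id x
  have key := ((((hid.mul_const py).const_sub (y * px)).const_mul py).add
      (hid.const_mul (2 * a * y ^ 2))).add_const (c1 / 2 * y ^ 2)
      |>.sub (hid.const_mul (2 * c2 / y ^ 2))
  have hf : (fun t : ℝ =>
      py * (y * px - t * py) + 2 * a * t * y ^ 2 + c1 / 2 * y ^ 2 - 2 * c2 * t / y ^ 2)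
      = fun t : ℝ =>
      py * (y * px - id t * py) + 2 * a * y ^ 2 * id t + c1 / 2 * y ^ 2 - 2 * c2 / y ^ 2 * id t := by
    funext t; simp; ring
  simp only [pd1, Hpar]
  rw [hf]; erw [key.deriv]; ring

lemma pd2_Hpar (hy : y ≠ 0) : pd2 (Hpar a c1 c2) x y px py
    = py * px + 4 * a * x * y + c1 * y + 4 * c2 * x / y ^ 3 := by
  have h1 : HasDerivAt (fun t : ℝ => t ^ 2) (2 * y) y := by simpa using hasDerivAt_pow 2 y
  have hid := hasDerivAt_id y
  have key := (((((hid.mul_const px).sub_const (x * py)).const_mul py).add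
      (h1.const_mul (2 * a * x))).add (h1.const_mul (c1 / 2))).sub
      ((h1.inv (pow_ne_zero 2 hy)).const_mul (2 * c2 * x))
  have hf : (fun t : ℝ =>
      py * (t * px - x * py) + 2 * a * x * t ^ 2 + c1 / 2 * t ^ 2 - 2 * c2 * x / t ^ 2)
      = fun t : ℝ =>
      py * (id t * px - x * py) + 2 * a * x * t ^ 2 + c1 / 2 * t ^ 2 - 2 * c2 * x * (t ^ 2)⁻¹ := by
    funext t; simp; ring
  simp only [pd2, Hpar]
  rw [hf]; erw [key.deriv]; field_simp; ring

lemma pd3_Hpar : pd3 (Hpar a c1 c2) x y px py = py * y := by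
  have hid := hasDerivAt_id px
  have key := ((((hid.const_mul y).sub_const (x * py)).const_mul py).add_const
      (2 * a * x * y ^ 2)).add_const (c1 / 2 * y ^ 2) |>.sub_const (2 * c2 * x / y ^ 2)
  have hf : (fun t : ℝ =>
      py * (y * t - x * py) + 2 * a * x * y ^ 2 + c1 / 2 * y ^ 2 - 2 * c2 * x / y ^ 2)
      = fun t : ℝ =>
      py * (y * id t - x * py) + 2 * a * x * y ^ 2 + c1 / 2 * y ^ 2 - 2 * c2 * x / y ^ 2 := by
    funext t; simp
  simp only [pd3, Hpar]
  rw [hf, key.deriv]; ring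

lemma pd4_Hpar : pd4 (Hpar a c1 c2) x y px py = y * px - 2 * x * py := by
  have hid := hasDerivAt_id py
  have key := ((hid.mul ((hid.const_mul x).const_sub (y * px))).add_const
      (2 * a * x * y ^ 2)).add_const (c1 / 2 * y ^ 2) |>.sub_const (2 * c2 * x / y ^ 2)
  have hf : (fun t : ℝ =>
      t * (y * px - x * t) + 2 * a * x * y ^ 2 + c1 / 2 * y ^ 2 - 2 * c2 * x / y ^ 2)
      = fun t : ℝ =>
      id t * (y * px - x * id t) + 2 * a * x * y ^ 2 + c1 / 2 * y ^ 2 - 2 * c2 * x / y ^ 2 := by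
    funext t; simp
  simp only [pd4, Hpar]
  rw [hf]; erw [key.deriv]; simp only [id_eq]; ring

end Aux

theorem SWII_superintegrable (a c1 c2 : ℝ) :
    ∀ x y px py : ℝ, y ≠ 0 →
      pb (Hswii a c1 c2) (Hcart a c2) x y px py = 0 ∧
      pb (Hswii a c1 c2) (Hpar a c1 c2) x y px py = 0 := by
  intro x y px py hy
  constructor <;>
  · simp only [pb, pd1_Hswii, pd2_Hswii a c1 c2 x y px py hy, pd3_Hswii, pd4_Hswii,
      pd1_Hcart, pd2_Hcart a c2 x y px py hy, pd3_Hcart, pd4_Hcart,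
      pd1_Hpar, pd2_Hpar a c1 c2 x y px py hy, pd3_Hpar, pd4_Hpar]
    field_simp
    ring
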